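/- Let λ = (λ₁ ≥ λ₂ ≥ ⋯ ≥ λ_d ≥ 0) be an integer partition with at most d parts and let n = λ₁ + ⋯ + λ_d. Then the number of standard Young tableaux of shape λ satisfies f^λ = n! · det( 1/(λ_i − i + j)! )_{1≤i,j≤d}, where the determinant is over ℚ and 1/m! is interpreted as 0 when m < 0. -/

import Mathlib

open scoped BigOperators

/-- A function `ℕ → ℕ` represents an integer partition if it is weakly decreasing and
eventually zero (the value at `i` is the length of row `i` of the Young diagram). -/
def IsPartFun (f : ℕ → ℕ) : Prop :=
  (∀ i j : ℕ, i ≤ j → f j ≤ f i) ∧ ∃ N, ∀ i, N ≤ i → f i = 0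

/-- The Young diagram of `g` is obtained from that of `f` by adding exactly one square. -/
def AddBox (f g : ℕ → ℕ) : Prop :=
  ∃ i, g = Function.update f i (f i + 1)

/-- `f^μ`: the number of standard Young tableaux of shape `μ`, i.e. of chains
`∅ = ν⁰ ⊂ ν¹ ⊂ ⋯ ⊂ ν^m = μ` of Young diagrams each obtained from the previous one
by adding one square (here `m = |μ|`). -/
noncomputable def sytCount (m : ℕ) (mu : ℕ → ℕ) : ℕ :=
  Nat.card {T : Fin (m + 1) → ℕ → ℕ //
    (∀ k, IsPartFun (T k)) ∧ T 0 = (fun _ => 0) ∧ T (Fin.last m) = mu ∧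
    ∀ k : Fin m, AddBox (T k.castSucc) (T k.succ)}

/-- `1/m!` for an integer `m`, interpreted as `0` when `m < 0`. -/
noncomputable def invFact (m : ℤ) : ℚ :=
  if 0 ≤ m then (1 : ℚ) / m.toNat.factorial else 0

/-!
With `D(λ) = det (1/(λ_i - i + j)!)`, both `f^λ` and `|λ|! D(λ)` satisfy the recursion "sum over
the boxes that can be removed". Removing the last box of a chain gives `f^λ = ∑ f^(λ - e_r)` over
the removable corners `r`. On the determinant side, `1/(m-1)! = m/m!` turns the matrix of
`λ - e_r` into that of `λ` with row `r` scaled entrywise by `λ_r - r + j`; in the Leibniz expansion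
these factors add up, over `r`, to `∑ (λ_r - r + σ⁻¹ r) = |λ|`, so `|λ| D(λ) = ∑_r D(λ - e_r)`.
When `λ - e_r` is not a partition, `D(λ - e_r)` has two equal rows or a vanishing last row.
-/

theorem invFact_sub_one (m : ℤ) : invFact (m - 1) = m * invFact m := by
  unfold invFact
  rcases lt_trichotomy m 0 with h | rfl | h
  · rw [if_neg (by omega), if_neg (by omega), mul_zero]
  · simp
  · obtain ⟨k, rfl⟩ : ∃ k : ℕ, m = k + 1 := ⟨(m - 1).toNat, by omega⟩
    rw [if_pos (by omega), if_pos (by omega), add_sub_cancel_right, Int.toNat_natCast,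
      show ((k : ℤ) + 1).toNat = k + 1 by omega, Nat.factorial_succ]
    push_cast
    field_simp

namespace Matrix

variable {n R : Type*} [Fintype n] [DecidableEq n] [CommRing R]

theorem sum_det_updateRow_mul_add (M : Matrix n n R) (a b : n → R) :
    ∑ r, (M.updateRow r fun j => (a r + b j) * M r j).det = (∑ r, a r + ∑ j, b j) * M.det := by
  have hprod (r : n) (σ : Equiv.Perm n) :
      ∏ i, (M.updateRow r fun j => (a r + b j) * M r j) (σ i) i
        = (a r + b (σ.symm r)) * ∏ i, M (σ i) i := by
    have hentry (i : n) : (M.updateRow r fun j => (a r + b j) * M r j) (σ i) i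
        = (if i = σ.symm r then a r + b i else 1) * M (σ i) i := by
      rw [updateRow_apply]
      by_cases h : σ i = r
      · rw [if_pos h, if_pos (σ.eq_symm_apply.mpr h), h]
      · rw [if_neg h, if_neg (fun h' => h (σ.eq_symm_apply.mp h')), one_mul]
    simp only [hentry, Finset.prod_mul_distrib, Finset.prod_ite_eq', Finset.mem_univ, if_true]
  have hsum (σ : Equiv.Perm n) : ∑ r, (a r + b (σ.symm r)) = ∑ r, a r + ∑ j, b j := by
    rw [Finset.sum_add_distrib, Equiv.sum_comp σ.symm b]
  simp only [det_apply', hprod, Finset.mul_sum]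
  rw [Finset.sum_comm]
  refine Finset.sum_congr rfl fun σ _ => ?_
  rw [← hsum σ, Finset.sum_mul]
  exact Finset.sum_congr rfl fun r _ => by ring

end Matrix

section HookDet

variable {d : ℕ}

/-- `det (1/(a i - i + j)!)`, for any integer vector `a`, so that lowering an entry never
truncates. -/
noncomputable def hookDet (a : Fin d → ℤ) : ℚ :=
  (Matrix.of fun i j : Fin d => invFact (a i - i + j)).det

theorem sum_hookDet_update_sub_one (a : Fin d → ℤ) :
    ∑ r, hookDet (Function.update a r (a r - 1)) = (∑ r, (a r : ℚ)) * hookDet a := by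
  set M : Matrix (Fin d) (Fin d) ℚ := Matrix.of fun i j : Fin d => invFact (a i - i + j)
  have hrow (r : Fin d) : hookDet (Function.update a r (a r - 1))
      = (M.updateRow r fun j => (((a r : ℚ) - r) + j) * M r j).det := by
    rw [hookDet]
    congr 1
    ext i j
    rcases eq_or_ne i r with rfl | hi
    · simp only [M, Matrix.updateRow_self, Matrix.of_apply, Function.update_self]
      rw [show a i - 1 - i + j = a i - i + j - 1 by ring, invFact_sub_one]
      push_cast
      rfl
    · simp [M, hi]
  have hsum : ∑ r : Fin d, ((a r : ℚ) - r) + ∑ j : Fin d, (j : ℚ) = ∑ r, (a r : ℚ) := by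
    rw [Finset.sum_sub_distrib, sub_add_cancel]
  simp only [hrow]
  rw [Matrix.sum_det_updateRow_mul_add, hsum]
  rfl

theorem hookDet_eq_zero_of_sub_eq {a : Fin d → ℤ} {i j : Fin d} (hij : i ≠ j)
    (h : a i - i = a j - j) : hookDet a = 0 :=
  Matrix.det_zero_of_row_eq hij (funext fun k => by simp [h])

theorem hookDet_eq_zero_of_add_le {a : Fin d → ℤ} (r : Fin d) (h : a r + d ≤ r) :
    hookDet a = 0 :=
  Matrix.det_eq_zero_of_row_eq_zero r fun j => by
    have := j.isLt
    simp only [Matrix.of_apply, invFact]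
    rw [if_neg (by omega)]

theorem hookDet_zero : hookDet (0 : Fin d → ℤ) = 1 := by
  rw [hookDet, Matrix.det_of_isUpperTriangular]
  · simp [invFact]
  · intro i j hji
    have : (j : ℤ) < i := by exact_mod_cast hji
    simp only [Matrix.of_apply, invFact, Pi.zero_apply]
    rw [if_neg (by omega)]

end HookDet

section Chains

open Function

theorem addBox_iff {ν μ : ℕ → ℕ} : AddBox ν μ ↔ ∃ i, 0 < μ i ∧ ν = update μ i (μ i - 1) := by
  constructor
  · rintro ⟨i, rfl⟩
    exact ⟨i, by simp, by simp⟩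
  · rintro ⟨i, hi, rfl⟩
    exact ⟨i, by simp [Nat.sub_add_cancel hi]⟩

theorem IsPartFun.update_sub_one {μ : ℕ → ℕ} (hμ : IsPartFun μ) {r : ℕ} (hr : μ (r + 1) < μ r) :
    IsPartFun (update μ r (μ r - 1)) := by
  obtain ⟨hanti, N, hN⟩ := hμ
  refine ⟨fun i j hij => ?_, N, fun i hi => ?_⟩
  · simp only [update_apply]
    split_ifs with hj hi hi
    · exact le_rfl
    · subst hj; have := hanti i j hij; omega
    · subst hi; have := hanti (i + 1) j (by omega); omega
    · exact hanti i j hij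
  · rcases eq_or_ne i r with rfl | h <;> simp [*, hN _ hi]

abbrev SYTChain (m : ℕ) (μ : ℕ → ℕ) :=
  {T : Fin (m + 1) → ℕ → ℕ //
    (∀ k, IsPartFun (T k)) ∧ T 0 = (fun _ => 0) ∧ T (Fin.last m) = μ ∧
    ∀ k : Fin m, AddBox (T k.castSucc) (T k.succ)}

theorem SYTChain.isPartFun {m : ℕ} {μ : ℕ → ℕ} (T : SYTChain m μ) : IsPartFun μ :=
  T.2.2.2.1 ▸ T.2.1 _

def SYTChain.succEquiv {m : ℕ} {μ : ℕ → ℕ} (hμ : IsPartFun μ) :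
    SYTChain (m + 1) μ ≃ Σ ν : {ν // AddBox ν μ}, SYTChain m ν where
  toFun T := ⟨⟨T.1 (Fin.last m).castSucc, by simpa [T.2.2.2.1] using T.2.2.2.2 (Fin.last m)⟩,
    ⟨Fin.init T.1, fun k => T.2.1 _, T.2.2.1, rfl, fun k => T.2.2.2.2 k.castSucc⟩⟩
  invFun x := ⟨Fin.snoc x.2.1 μ, by
    obtain ⟨⟨ν, hν⟩, T, hpart, h0, hlast, hstep⟩ := x
    refine ⟨fun k => ?_, ?_, by simp, fun k => ?_⟩
    · induction k using Fin.lastCases <;> simp [hμ, hpart]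
    · simpa using h0
    · induction k using Fin.lastCases
      · simpa [hlast] using hν
      · rw [Fin.succ_castSucc, Fin.snoc_castSucc, Fin.snoc_castSucc]; exact hstep _⟩
  left_inv T := Subtype.ext (by simp [← T.2.2.2.1])
  right_inv := by
    rintro ⟨⟨ν, hν⟩, T, hT⟩
    exact Sigma.subtype_ext (Subtype.ext (by simp [hT.2.2.1])) (by simp)

noncomputable def removeBoxEquiv {d : ℕ} {μ : ℕ → ℕ} (hsupp : ∀ x, d ≤ x → μ x = 0) :
    {i : Fin d // 0 < μ i} ≃ {ν // AddBox ν μ} :=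
  Equiv.ofBijective (fun i => ⟨update μ i (μ i - 1), addBox_iff.2 ⟨i, i.2, rfl⟩⟩) <| by
    constructor
    · rintro ⟨i, hi⟩ ⟨j, _⟩ h
      by_contra hij
      have := congr_fun (congr_arg Subtype.val h) i
      simp only [update_self, Subtype.mk.injEq] at this hij
      rw [update_of_ne (Fin.val_injective.ne hij)] at this
      omega
    · rintro ⟨ν, hν⟩
      obtain ⟨i, hi, rfl⟩ := addBox_iff.1 hν
      have hid : i < d := by_contra fun h => hi.ne' (hsupp i (not_lt.1 h))
      exact ⟨⟨⟨i, hid⟩, hi⟩, rfl⟩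

instance SYTChain.subsingleton_zero (μ : ℕ → ℕ) : Subsingleton (SYTChain 0 μ) :=
  ⟨fun T S => Subtype.ext <| funext fun k => by rw [Fin.fin_one_eq_zero k, T.2.2.1, S.2.2.1]⟩

instance SYTChain.finite (m : ℕ) (μ : ℕ → ℕ) : Finite (SYTChain m μ) := by
  induction m generalizing μ with
  | zero => infer_instance
  | succ m ih =>
    by_cases hμ : IsPartFun μ
    · obtain ⟨N, hN⟩ := hμ.2
      exact Finite.of_equiv _
        ((SYTChain.succEquiv hμ).trans (Equiv.sigmaCongrLeft (removeBoxEquiv hN)).symm).symm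
    · have : IsEmpty (SYTChain (m + 1) μ) := ⟨fun T => hμ T.isPartFun⟩
      infer_instance

theorem sytCount_succ {d m : ℕ} {μ : ℕ → ℕ} (hμ : IsPartFun μ) (hsupp : ∀ x, d ≤ x → μ x = 0) :
    sytCount (m + 1) μ =
      ∑ i : Fin d, if 0 < μ i then sytCount m (update μ i (μ i - 1)) else 0 := by
  rw [sytCount, Nat.card_congr
      ((SYTChain.succEquiv hμ).trans (Equiv.sigmaCongrLeft (removeBoxEquiv hsupp)).symm),
    Nat.card_sigma, ← Finset.sum_filter, ← Finset.sum_subtype_eq_sum_filter, Finset.subtype_univ]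
  rfl

theorem sytCount_eq_zero_of_not_isPartFun {m : ℕ} {μ : ℕ → ℕ} (hμ : ¬ IsPartFun μ) :
    sytCount m μ = 0 :=
  have : IsEmpty (SYTChain m μ) := ⟨fun T => hμ T.isPartFun⟩
  Nat.card_of_isEmpty

theorem sytCount_zero_zero : sytCount 0 0 = 1 :=
  Nat.card_eq_one_iff_unique.2
    ⟨inferInstance, ⟨fun _ => fun _ => 0, fun _ => ⟨fun _ _ _ => le_rfl, 0, fun _ _ => rfl⟩,
      rfl, rfl, Fin.elim0⟩⟩

end Chains

section Recursion

open Function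

variable {d : ℕ} {μ : ℕ → ℕ}

theorem sum_update_sub_one {ι : Type*} [Fintype ι] [DecidableEq ι] (f : ι → ℕ) {r : ι}
    (hr : 0 < f r) : ∑ i, update f r (f r - 1) i + 1 = ∑ i, f i := by
  rw [Finset.sum_update_of_mem (Finset.mem_univ r),
    Finset.sum_eq_add_sum_sdiff_singleton_of_mem (Finset.mem_univ r) f]
  omega

theorem sum_fin_update_sub_one {r : Fin d} (hr : 0 < μ r) :
    ∑ i : Fin d, update μ r (μ r - 1) i + 1 = ∑ i : Fin d, μ i := by
  change ∑ i, (update μ r (μ r - 1) ∘ Fin.val) i + 1 = _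
  rw [update_comp_eq_of_injective μ Fin.val_injective]
  exact sum_update_sub_one _ hr

theorem intCast_fin_update_sub_one {r : Fin d} (hr : 0 < μ r) :
    (fun i : Fin d => (update μ r (μ r - 1) i : ℤ)) =
      update (fun i : Fin d => (μ i : ℤ)) r (μ r - 1) := by
  funext i
  rcases eq_or_ne i r with rfl | hir
  · simp only [update_self]
    omega
  · simp [hir, Fin.val_injective.ne hir]

theorem hookDet_update_eq_zero (hμ : IsPartFun μ) (hsupp : ∀ x, d ≤ x → μ x = 0) (r : Fin d)
    (h : ¬ (0 < μ r ∧ IsPartFun (update μ r (μ r - 1)))) :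
    hookDet (update (fun i : Fin d => (μ i : ℤ)) r (μ r - 1)) = 0 := by
  have heq : μ (r + 1) = μ r := by
    by_contra hne
    have hlt : μ (r + 1) < μ r := lt_of_le_of_ne (hμ.1 _ _ (by omega)) hne
    exact h ⟨by omega, hμ.update_sub_one hlt⟩
  by_cases hr : r.1 + 1 < d
  · refine hookDet_eq_zero_of_sub_eq (i := r) (j := ⟨r + 1, hr⟩) (by simp [Fin.ext_iff]) ?_
    simp [update_of_ne (show (⟨r + 1, hr⟩ : Fin d) ≠ r by simp [Fin.ext_iff]), heq]
    ring
  · have : μ r = 0 := heq ▸ hsupp _ (by omega)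
    exact hookDet_eq_zero_of_add_le r (by simp [this]; omega)

theorem sytCount_eq_factorial_mul_hookDet (n : ℕ) (hμ : IsPartFun μ)
    (hsupp : ∀ x, d ≤ x → μ x = 0) (hsum : ∑ i : Fin d, μ i = n) :
    (sytCount n μ : ℚ) = n.factorial * hookDet (fun i : Fin d => (μ i : ℤ)) := by
  induction n generalizing μ with
  | zero =>
    obtain rfl : μ = 0 := funext fun x => by
      by_cases hx : x < d
      · exact Finset.sum_eq_zero_iff.1 hsum ⟨x, hx⟩ (Finset.mem_univ _)
      · exact hsupp x (not_lt.1 hx)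
    simp [sytCount_zero_zero, ← Pi.zero_def, hookDet_zero]
  | succ n ih =>
    have hterm (r : Fin d) :
        (((if 0 < μ r then sytCount n (update μ r (μ r - 1)) else 0 : ℕ)) : ℚ) =
          n.factorial * hookDet (update (fun i : Fin d => (μ i : ℤ)) r (μ r - 1)) := by
      by_cases h : 0 < μ r ∧ IsPartFun (update μ r (μ r - 1))
      · have hsupp' (x : ℕ) (hx : d ≤ x) : update μ r (μ r - 1) x = 0 := by
          rw [update_of_ne (by omega), hsupp x hx]
        have hsum' := (sum_fin_update_sub_one h.1).trans hsum
        rw [if_pos h.1, ih h.2 hsupp' (by omega), intCast_fin_update_sub_one h.1]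
      · rw [hookDet_update_eq_zero hμ hsupp r h, mul_zero]
        split_ifs with h0
        · exact_mod_cast sytCount_eq_zero_of_not_isPartFun fun hp => h ⟨h0, hp⟩
        · rfl
    have hsumq : ∑ r : Fin d, ((μ r : ℤ) : ℚ) = n + 1 := by
      push_cast
      exact_mod_cast hsum
    calc (sytCount (n + 1) μ : ℚ)
        = ∑ r : Fin d, (((if 0 < μ r then sytCount n (update μ r (μ r - 1)) else 0 : ℕ)) : ℚ) := by
          rw [sytCount_succ hμ hsupp, Nat.cast_sum]
      _ = n.factorial * ∑ r, hookDet (update (fun i : Fin d => (μ i : ℤ)) r (μ r - 1)) := by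
          simp only [hterm, Finset.mul_sum]
      _ = (n + 1).factorial * hookDet (fun i : Fin d => (μ i : ℤ)) := by
          rw [sum_hookDet_update_sub_one, hsumq, Nat.factorial_succ]
          push_cast
          ring

end Recursion

theorem Antitone.isPartFun_extend_zero {d : ℕ} {lam : Fin d → ℕ} (hlam : Antitone lam) :
    IsPartFun fun i => if h : i < d then lam ⟨i, h⟩ else 0 := by
  refine ⟨fun i j hij => ?_, d, fun i hi => dif_neg (by omega)⟩
  dsimp only
  by_cases hj : j < d
  · rw [dif_pos hj, dif_pos (by omega)]
    exact hlam (Fin.mk_le_mk.2 hij)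
  · rw [dif_neg hj]
    exact Nat.zero_le _

theorem hook_length_determinant_general (d : ℕ) (lam : Fin d → ℕ)
    (hanti : ∀ i j : Fin d, i ≤ j → lam j ≤ lam i) :
    (sytCount (∑ i, lam i)
        (fun i => if h : i < d then lam ⟨i, h⟩ else 0) : ℚ) =
      (∑ i, lam i).factorial *
        Matrix.det (Matrix.of fun i j : Fin d =>
          invFact ((lam i : ℤ) - (i : ℤ) + (j : ℤ))) := by
  have hrestrict (i : Fin d) : (if h : i.1 < d then lam ⟨i, h⟩ else 0) = lam i := dif_pos i.isLt
  simpa [hrestrict, hookDet] using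
    sytCount_eq_factorial_mul_hookDet (d := d) (∑ i, lam i) (Antitone.isPartFun_extend_zero hanti)
      (fun x hx => dif_neg (by omega)) (Finset.sum_congr rfl fun i _ => hrestrict i)

/-- **Hook-length formula (determinant form).**  For a partition `λ` with at most
`d` parts and `n = |λ|`:  `f^λ = n! · det( 1/(λ_i - i + j)! )_{1 ≤ i,j ≤ d}`. -/
theorem hook_length_determinant (d : ℕ) (hd : 1 ≤ d) (lam : Fin d → ℕ)
    (hanti : ∀ i j : Fin d, i ≤ j → lam j ≤ lam i) :
    (sytCount (∑ i, lam i)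
        (fun i => if h : i < d then lam ⟨i, h⟩ else 0) : ℚ) =
      (∑ i, lam i).factorial *
        Matrix.det (Matrix.of fun i j : Fin d =>
          invFact ((lam i : ℤ) - (i : ℤ) + (j : ℤ))) :=
  hook_length_determinant_general d lam hanti
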